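/- For angles 0 = c_1 ≤ c_2 ≤ ... ≤ c_n < π, the minimum of |p_1 + ∑_{i=2}^n p_i e^{ic_i}|² over all p_i ≥ 0 with ∑_i p_i = 1 equals cos²(c_n/2). -/

import Mathlib

/-! Write `C = c (Fin.last n)`. After rotating by `exp (-(C / 2) * I)`, all the points
`exp (c i * I)` lie on the arc of half-angle `C / 2 < π / 2` around `1`, so every convex
combination of them has real part, hence norm, at least `cos (C / 2)`. Putting mass `1 / 2` on
each end of the arc attains the bound, since
`(1 + exp (C * I)) / 2 = exp (C / 2 * I) * cos (C / 2)`. -/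

theorem Real.cos_half_sub_le_cos_sub_midpoint {a b x : ℝ} (hx : x ∈ Set.Icc a b)
    (hab : b - a ≤ 2 * Real.pi) : Real.cos ((b - a) / 2) ≤ Real.cos (x - (a + b) / 2) := by
  rw [← Real.cos_abs (x - (a + b) / 2)]
  refine Real.cos_le_cos_of_nonneg_of_le_pi (abs_nonneg _) (by linarith) ?_
  rw [abs_le]
  constructor <;> linarith [hx.1, hx.2]

open Complex in
theorem Complex.cos_le_norm_sum_mul_exp {ι : Type*} (s : Finset ι) {p θ : ι → ℝ}
    (hp : ∀ i ∈ s, 0 ≤ p i) (hp1 : ∑ i ∈ s, p i = 1) {a b : ℝ}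
    (hθ : ∀ i ∈ s, θ i ∈ Set.Icc a b) (hab : b - a ≤ 2 * Real.pi) :
    Real.cos ((b - a) / 2) ≤ ‖∑ i ∈ s, (p i : ℂ) * exp (θ i * I)‖ := by
  set m := (a + b) / 2
  have hrotate : (exp (↑(-m) * I) * ∑ i ∈ s, (p i : ℂ) * exp (θ i * I)).re
      = ∑ i ∈ s, p i * Real.cos (θ i - m) := by
    rw [Finset.mul_sum, re_sum]
    refine Finset.sum_congr rfl fun i _ => ?_
    rw [mul_left_comm, ← exp_add, ← add_mul, ← ofReal_add, re_ofReal_mul,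
      exp_ofReal_mul_I_re, neg_add_eq_sub]
  calc Real.cos ((b - a) / 2) = ∑ i ∈ s, p i * Real.cos ((b - a) / 2) := by
        rw [← Finset.sum_mul, hp1, one_mul]
    _ ≤ ∑ i ∈ s, p i * Real.cos (θ i - m) := Finset.sum_le_sum fun i hi =>
        mul_le_mul_of_nonneg_left (Real.cos_half_sub_le_cos_sub_midpoint (hθ i hi) hab) (hp i hi)
    _ = (exp (↑(-m) * I) * ∑ i ∈ s, (p i : ℂ) * exp (θ i * I)).re := hrotate.symm
    _ ≤ ‖exp (↑(-m) * I) * ∑ i ∈ s, (p i : ℂ) * exp (θ i * I)‖ := re_le_norm _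
    _ = ‖∑ i ∈ s, (p i : ℂ) * exp (θ i * I)‖ := by
        rw [norm_mul, norm_exp_ofReal_mul_I, one_mul]

open Complex in
theorem Complex.norm_half_add_half_mul_exp (x : ℝ) :
    ‖(1 / 2 : ℂ) + 1 / 2 * exp (x * I)‖ = |Real.cos (x / 2)| := by
  have h : (1 / 2 : ℂ) + 1 / 2 * exp (x * I) = exp (↑(x / 2) * I) * ↑(Real.cos (x / 2)) := by
    rw [ofReal_cos, ← mul_div_cancel_left₀ (cos _) (two_ne_zero' ℂ), two_cos]
    rw [mul_div_assoc', mul_add, ← exp_add, ← exp_add]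
    push_cast
    ring_nf
    rw [exp_zero]
    ring
  rw [h, norm_mul, norm_exp_ofReal_mul_I, one_mul, norm_real, Real.norm_eq_abs]

theorem stmt_8 {n : ℕ} (c : Fin (n + 1) → ℝ) (hmono : Monotone c) (h0 : c 0 = 0)
    (hπ : c (Fin.last n) < Real.pi) :
    IsLeast
      {v : ℝ | ∃ p : Fin (n + 1) → ℝ, (∀ i, 0 ≤ p i) ∧ ∑ i, p i = 1 ∧
        v = ‖∑ i, (p i : ℂ) * Complex.exp ((c i : ℂ) * Complex.I)‖ ^ 2}
      (Real.cos (c (Fin.last n) / 2) ^ 2) := by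
  have hc : ∀ i ∈ Finset.univ, c i ∈ Set.Icc 0 (c (Fin.last n)) := fun i _ =>
    ⟨h0 ▸ hmono (Fin.zero_le i), hmono (Fin.le_last i)⟩
  have hcos : 0 ≤ Real.cos (c (Fin.last n) / 2) :=
    Real.cos_nonneg_of_mem_Icc
      ⟨by linarith [Real.pi_pos, (hc (Fin.last n) (Finset.mem_univ _)).1], by linarith⟩
  refine ⟨⟨Pi.single 0 (1 / 2) + Pi.single (Fin.last n) (1 / 2), ?_, ?_, ?_⟩, ?_⟩
  · intro i
    simp only [Pi.add_apply, Pi.single_apply]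
    positivity
  · simp [Finset.sum_add_distrib]
    norm_num
  · have hsum : ∑ i, ((Pi.single 0 (1 / 2) + Pi.single (Fin.last n) (1 / 2) :
          Fin (n + 1) → ℝ) i : ℂ) * Complex.exp (c i * Complex.I) =
        1 / 2 + 1 / 2 * Complex.exp (c (Fin.last n) * Complex.I) := by
      simp [add_mul, Finset.sum_add_distrib, Pi.single_apply, apply_ite Complex.ofReal, h0]
    rw [hsum, Complex.norm_half_add_half_mul_exp, sq_abs]
  · rintro v ⟨p, hp, hp1, rfl⟩
    have hnorm := Complex.cos_le_norm_sum_mul_exp Finset.univ (fun i _ => hp i) hp1 hc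
      (by linarith [Real.pi_pos])
    rw [sub_zero] at hnorm
    exact pow_le_pow_left₀ hcos hnorm 2
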